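/- Let n ≥ 1, m ∈ ℤ, and let λ ∈ ℝ^n have pairwise distinct nonzero entries. Let J(λ) be the n×n Jacobian matrix J_{ij} = ∂q_i/∂λ_j of the Viète map, and let G^{(m)}(λ) = diag(λ_1^m/Δ_1(λ), …, λ_n^m/Δ_n(λ)). Then the n×n matrix J(λ) G^{(m)}(λ) J(λ)^T is invertible and its inverse is the matrix whose (i,j) entry is V_1^{(2n−m−i−j)}(q(λ)); i.e., the covariant metric g^{(m)} in Viète coordinates has entries g^{(m)}_{ij} = V_1^{(2n−m−i−j)}. -/

import Mathlib

noncomputable section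

/-- Viète polynomial `q_i(λ) = (-1)^i e_i(λ)`; by convention `q_0 = 1` and `q_i = 0` for `i > n`. -/
def viete {n : ℕ} (i : ℕ) (lam : Fin n → ℝ) : ℝ :=
  (-1 : ℝ) ^ i * ∑ s ∈ Finset.powersetCard i (Finset.univ : Finset (Fin n)), ∏ j ∈ s, lam j

/-- The partial derivative `∂q_i/∂λ_j` of the `i`-th Viète polynomial. -/
def vieteD {n : ℕ} (i : ℕ) (lam : Fin n → ℝ) (j : Fin n) : ℝ :=
  fderiv ℝ (viete i) lam (Pi.single j 1)

/-- `Δ_j(λ) = ∏_{s ≠ j} (λ_j - λ_s)`. -/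
def Delta {n : ℕ} (lam : Fin n → ℝ) (j : Fin n) : ℝ :=
  ∏ s ∈ Finset.univ.erase j, (lam j - lam s)

/-- Benenti potentials `V_i^{(k)}` for `k ≥ 0`: `Vpos n q k i = V_i^{(k)}(q)` (`i` 1-based),
with `V_i^{(0)} = δ_{i n}` and `V_i^{(k+1)} = V_{i+1}^{(k)} - q_i V_1^{(k)}`, `V_{n+1}^{(k)} := 0`. -/
def Vpos (n : ℕ) (q : ℕ → ℝ) : ℕ → ℕ → ℝ
  | 0, i => if i = n then 1 else 0
  | k + 1, i => (if i = n then 0 else Vpos n q k (i + 1)) - q i * Vpos n q k 1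

/-- Benenti potentials for negative superscripts: `Vneg n q j r = V_r^{(-j)}(q)`, via the
backward recursion `V_r^{(k)} = V_{r-1}^{(k+1)} - (q_{r-1}/q_n) V_n^{(k+1)}`, with
`V_0 := 0` and `q_0 := 1`. -/
def Vneg (n : ℕ) (q : ℕ → ℝ) : ℕ → ℕ → ℝ
  | 0, r => if r = n then 1 else 0
  | j + 1, r =>
      (if r = 1 then 0 else Vneg n q j (r - 1)) -
        (if r = 1 then 1 else q (r - 1)) / q n * Vneg n q j n

/-- Benenti potential `V_i^{(k)}(q)` for `k : ℤ`, `i` 1-based. -/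
def benenti (n : ℕ) (q : ℕ → ℝ) (k : ℤ) (i : ℕ) : ℝ :=
  if 0 ≤ k then Vpos n q k.toNat i else Vneg n q (-k).toNat i

/-- The Jacobian matrix `J_{ij} = ∂q_i/∂λ_j` of the Viète map (`i` 1-based). -/
def Jmat (n : ℕ) (lam : Fin n → ℝ) : Matrix (Fin n) (Fin n) ℝ :=
  Matrix.of fun i j => vieteD ((i : ℕ) + 1) lam j

/-- The contravariant metric `G^{(m)} = diag(λ_j^m / Δ_j(λ))`. -/
def Gmat (n : ℕ) (m : ℤ) (lam : Fin n → ℝ) : Matrix (Fin n) (Fin n) ℝ :=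
  Matrix.diagonal fun j => lam j ^ m / Delta lam j

/-- The candidate covariant metric in Viète coordinates: `g_{ij} = V_1^{(2n-m-i-j)}(q(λ))`
(`i`, `j` 1-based). -/
def gmat (n : ℕ) (m : ℤ) (lam : Fin n → ℝ) : Matrix (Fin n) (Fin n) ℝ :=
  Matrix.of fun i j =>
    benenti n (fun a => viete a lam)
      (2 * (n : ℤ) - m - (((i : ℕ) : ℤ) + 1) - (((j : ℕ) : ℤ) + 1)) 1

/-!
Let `U_{ij} = q_i(λ̂_j)` be the Viète polynomials of `λ` with `λ_j` removed and
`S_{ij} = λ_j^{n-1-i}`. Since `q_{i+1}` is affine in `λ_j` with slope `-q_i(λ̂_j)`, `J = -U`;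
expanding `∏_{s ≠ r} (λ_j - λ_s)` gives `Sᵀ U = diag Δ`, so `U⁻¹ = diag(Δ)⁻¹ Sᵀ`.

The sums `W_i^{(k)} = ∑_j q_{i-1}(λ̂_j) λ_j^k / Δ_j` satisfy the forward Benenti recursion for
every `k ∈ ℤ`, hence (as `q_n ≠ 0`) also the backward one, and `W_i^{(0)} = δ_{in}` is a row of
`U U⁻¹ = 1`. So `V_i^{(k)} = W_i^{(k)}`, i.e. `g = S diag(λ^{-m}/Δ) Sᵀ`, and then
`J G Jᵀ g = U G (Uᵀ S) diag(λ^{-m}/Δ) Sᵀ = U diag(Δ)⁻¹ Sᵀ = 1`.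
-/

open Finset Matrix

section VieteOn

variable {ι R : Type*} [CommRing R]

def vieteOn (T : Finset ι) (i : ℕ) (lam : ι → R) : R :=
  (-1) ^ i * ∑ s ∈ T.powersetCard i, ∏ a ∈ s, lam a

theorem vieteOn_zero (T : Finset ι) (lam : ι → R) : vieteOn T 0 lam = 1 := by
  simp [vieteOn]

theorem vieteOn_of_card_lt {T : Finset ι} {i : ℕ} (h : #T < i) (lam : ι → R) :
    vieteOn T i lam = 0 := by
  simp [vieteOn, powersetCard_eq_empty.mpr h]

theorem vieteOn_congr {T : Finset ι} {lam lam' : ι → R} (h : ∀ a ∈ T, lam a = lam' a) (i : ℕ) :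
    vieteOn T i lam = vieteOn T i lam' := by
  unfold vieteOn
  congr 1
  refine sum_congr rfl fun s hs => prod_congr rfl fun a ha => h a ?_
  exact (mem_powersetCard.mp hs).1 ha

theorem vieteOn_insert [DecidableEq ι] {T : Finset ι} {j : ι} (hj : j ∉ T) (i : ℕ)
    (lam : ι → R) :
    vieteOn (insert j T) (i + 1) lam = vieteOn T (i + 1) lam - lam j * vieteOn T i lam := by
  have hjs : ∀ s ∈ T.powersetCard i, j ∉ s := fun s hs h => hj ((mem_powersetCard.mp hs).1 h)
  have hsplit : ∑ s ∈ (insert j T).powersetCard (i + 1), ∏ a ∈ s, lam a =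
      ∑ s ∈ T.powersetCard (i + 1), ∏ a ∈ s, lam a +
        lam j * ∑ s ∈ T.powersetCard i, ∏ a ∈ s, lam a := by
    rw [powersetCard_succ_insert hj, sum_union, sum_image, mul_sum]
    · exact congrArg _ (sum_congr rfl fun s hs => prod_insert (hjs s hs))
    · intro s hs t ht hst
      simpa [erase_insert (hjs s hs), erase_insert (hjs t ht)] using congrArg (erase · j) hst
    · refine disjoint_left.mpr fun s hs hs' => ?_
      obtain ⟨t, -, rfl⟩ := mem_image.mp hs'
      exact hj ((mem_powersetCard.mp hs).1 (mem_insert_self j t))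
  rw [vieteOn, hsplit, vieteOn, vieteOn]
  ring

theorem prod_sub_eq_sum_vieteOn (T : Finset ι) (lam : ι → R) (x : R) :
    ∏ a ∈ T, (x - lam a) = ∑ i ∈ range (#T + 1), vieteOn T i lam * x ^ (#T - i) := by
  have h := congrArg (Polynomial.eval x) (Multiset.prod_X_sub_X_eq_sum_esymm (T.val.map lam))
  simp only [Multiset.map_map, Function.comp_def, Polynomial.eval_multiset_prod,
    Polynomial.eval_finsetSum, Polynomial.eval_mul, Polynomial.eval_pow, Polynomial.eval_C,
    Polynomial.eval_X, Polynomial.eval_sub, Polynomial.eval_neg, Polynomial.eval_one,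
    Multiset.card_map, Finset.esymm_map_val] at h
  rw [prod_eq_multiset_prod, h]
  simp [vieteOn, mul_assoc]

end VieteOn

section Viete

variable {n : ℕ}

theorem viete_eq_vieteOn (i : ℕ) (lam : Fin n → ℝ) : viete i lam = vieteOn univ i lam := rfl

theorem viete_succ_eq_vieteOn_erase (i : ℕ) (lam : Fin n → ℝ) (j : Fin n) :
    viete (i + 1) lam =
      vieteOn (univ.erase j) (i + 1) lam - lam j * vieteOn (univ.erase j) i lam := by
  rw [viete_eq_vieteOn, ← vieteOn_insert (notMem_erase j univ), insert_erase (mem_univ j)]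

theorem differentiable_viete (i : ℕ) : Differentiable ℝ (viete (n := n) i) := by
  unfold viete
  fun_prop

theorem vieteD_succ (i : ℕ) (lam : Fin n → ℝ) (j : Fin n) :
    vieteD (i + 1) lam j = -vieteOn (univ.erase j) i lam := by
  set A := vieteOn (univ.erase j) (i + 1) lam
  set B := vieteOn (univ.erase j) i lam
  have hline : ∀ t : ℝ, viete (i + 1) (lam + t • Pi.single j 1) = A - (lam j + t) * B := by
    intro t
    have hoff : ∀ a ∈ univ.erase j, (lam + t • Pi.single j 1 : Fin n → ℝ) a = lam a :=
      fun a ha => by simp [ne_of_mem_erase ha]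
    rw [viete_succ_eq_vieteOn_erase i _ j, vieteOn_congr hoff, vieteOn_congr hoff]
    simp [A, B]
  have hderiv : HasLineDerivAt ℝ (viete (i + 1)) (-B) lam (Pi.single j 1) := by
    unfold HasLineDerivAt
    simp_rw [hline]
    simpa using (((hasDerivAt_id (0 : ℝ)).const_add (lam j)).mul_const B).const_sub A
  rw [vieteD, ← (differentiable_viete (i + 1) lam).lineDeriv_eq_fderiv, hderiv.lineDeriv]

theorem viete_card_ne_zero {lam : Fin n → ℝ} (h0 : ∀ j, lam j ≠ 0) : viete n lam ≠ 0 := by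
  have hfull : powersetCard n (univ : Finset (Fin n)) = {univ} := by
    simpa using powersetCard_self (univ : Finset (Fin n))
  rw [viete, hfull, sum_singleton]
  exact mul_ne_zero (pow_ne_zero _ (by norm_num)) (prod_ne_zero_iff.mpr fun a _ => h0 a)

theorem Delta_ne_zero {lam : Fin n → ℝ} (hinj : Function.Injective lam) (j : Fin n) :
    Delta lam j ≠ 0 :=
  prod_ne_zero_iff.mpr fun _ hs => sub_ne_zero.mpr fun h => ne_of_mem_erase hs (hinj h).symm

end Viete

section Matrices

variable {n : ℕ}

def reducedVieteMatrix (lam : Fin n → ℝ) : Matrix (Fin n) (Fin n) ℝ :=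
  of fun i j => vieteOn (univ.erase j) i lam

def powerMatrix (lam : Fin n → ℝ) : Matrix (Fin n) (Fin n) ℝ :=
  of fun i j => lam j ^ (n - 1 - (i : ℕ))

theorem Jmat_eq_neg_reducedVieteMatrix (lam : Fin n → ℝ) :
    Jmat n lam = -reducedVieteMatrix lam := by
  ext i j
  simp [Jmat, reducedVieteMatrix, vieteD_succ]

theorem powerMatrix_transpose_mul_reducedVieteMatrix (lam : Fin n → ℝ) :
    (powerMatrix lam)ᵀ * reducedVieteMatrix lam = diagonal (Delta lam) := by
  ext j r
  have hcard : #(univ.erase r) = n - 1 := by simp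
  have hprod : ((powerMatrix lam)ᵀ * reducedVieteMatrix lam) j r =
      ∏ s ∈ univ.erase r, (lam j - lam s) := by
    rw [prod_sub_eq_sum_vieteOn, hcard, Nat.sub_add_cancel j.pos, ← Fin.sum_univ_eq_sum_range,
      mul_apply]
    simp [powerMatrix, reducedVieteMatrix, mul_comm]
  rw [hprod]
  by_cases hjr : j = r
  · subst hjr
    simp [Delta]
  · rw [diagonal_apply_ne _ hjr]
    exact prod_eq_zero (mem_erase.mpr ⟨hjr, mem_univ j⟩) (sub_self _)

theorem reducedVieteMatrix_mul_inverse {lam : Fin n → ℝ} (hinj : Function.Injective lam) :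
    reducedVieteMatrix lam * (diagonal (fun j => (Delta lam j)⁻¹) * (powerMatrix lam)ᵀ) = 1 := by
  refine mul_eq_one_comm.mp ?_
  rw [Matrix.mul_assoc, powerMatrix_transpose_mul_reducedVieteMatrix, diagonal_mul_diagonal,
    ← diagonal_one]
  exact congrArg diagonal (funext fun j => inv_mul_cancel₀ (Delta_ne_zero hinj j))

end Matrices

section BenentiSum

variable {n : ℕ}

/-- This is the Benenti potential `V_{i+1}^{(k)}` (note the shift of `i`). -/
def benentiSum (lam : Fin n → ℝ) (k : ℤ) (i : ℕ) : ℝ :=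
  ∑ j, vieteOn (univ.erase j) i lam * lam j ^ k / Delta lam j

theorem benentiSum_card (lam : Fin n → ℝ) (k : ℤ) : benentiSum lam k n = 0 :=
  sum_eq_zero fun j _ => by
    rw [vieteOn_of_card_lt (by simpa using j.pos), zero_mul, zero_div]

theorem benentiSum_zero {lam : Fin n → ℝ} (hinj : Function.Injective lam) {i : ℕ} (hi : i < n) :
    benentiSum lam 0 i = if i + 1 = n then 1 else 0 := by
  have h := congrFun (congrFun (reducedVieteMatrix_mul_inverse hinj) ⟨i, hi⟩) ⟨n - 1, by omega⟩
  rw [mul_apply] at h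
  simp only [one_apply, Fin.mk.injEq] at h
  simp only [benentiSum, zpow_zero, mul_one, div_eq_mul_inv, show i + 1 = n ↔ i = n - 1 by omega]
  rw [← h]
  simp [reducedVieteMatrix, powerMatrix, diagonal_mul]

/-- Multiplying by `λ_j` shifts `q_i(λ̂_j)` to `q_{i+1}(λ̂_j) - q_{i+1}(λ)`. -/
theorem benentiSum_add_one {lam : Fin n → ℝ} (h0 : ∀ j, lam j ≠ 0) (k : ℤ) (i : ℕ) :
    benentiSum lam (k + 1) i =
      benentiSum lam k (i + 1) - viete (i + 1) lam * benentiSum lam k 0 := by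
  simp only [benentiSum, vieteOn_zero, one_mul, mul_sum, ← sum_sub_distrib]
  refine sum_congr rfl fun j _ => ?_
  rw [zpow_add_one₀ (h0 j), viete_succ_eq_vieteOn_erase i lam j]
  ring

theorem benentiSum_sub_one {lam : Fin n → ℝ} (h0 : ∀ j, lam j ≠ 0) (hn : 0 < n) (k : ℤ)
    (i : ℕ) :
    benentiSum lam (k - 1) i =
      (if i = 0 then 0 else benentiSum lam k (i - 1)) -
        (if i = 0 then 1 else viete i lam) / viete n lam * benentiSum lam k (n - 1) := by
  have hshift := benentiSum_add_one h0 (k - 1)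
  simp only [sub_add_cancel] at hshift
  have hbottom : benentiSum lam (k - 1) 0 = -benentiSum lam k (n - 1) / viete n lam := by
    rw [hshift, Nat.sub_add_cancel hn, benentiSum_card, eq_div_iff (viete_card_ne_zero h0)]
    ring
  rcases i with _ | i
  · simp [hbottom, div_eq_inv_mul]
  · simp only [Nat.add_one_ne_zero, if_false, Nat.add_sub_cancel, hshift i]
    rw [hbottom]
    ring

theorem Vpos_eq_benentiSum {lam : Fin n → ℝ} (hinj : Function.Injective lam)
    (h0 : ∀ j, lam j ≠ 0) (k : ℕ) {r : ℕ} (h1 : 1 ≤ r) (h2 : r ≤ n) :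
    Vpos n (fun a => viete a lam) k r = benentiSum lam k (r - 1) := by
  induction k generalizing r with
  | zero => rw [Vpos, Nat.cast_zero, benentiSum_zero hinj (by omega), Nat.sub_add_cancel h1]
  | succ k ih =>
    rw [Vpos, Nat.cast_succ, benentiSum_add_one h0, Nat.sub_add_cancel h1, ih le_rfl (by omega)]
    congr 2
    split_ifs with hrn
    · rw [hrn, benentiSum_card]
    · exact ih (by omega) (by omega)

theorem Vneg_eq_benentiSum {lam : Fin n → ℝ} (hinj : Function.Injective lam)
    (h0 : ∀ j, lam j ≠ 0) (k : ℕ) {r : ℕ} (h1 : 1 ≤ r) (h2 : r ≤ n) :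
    Vneg n (fun a => viete a lam) k r = benentiSum lam (-k) (r - 1) := by
  induction k generalizing r with
  | zero =>
    rw [Vneg, Nat.cast_zero, neg_zero, benentiSum_zero hinj (by omega), Nat.sub_add_cancel h1]
  | succ k ih =>
    rw [Vneg, Nat.cast_succ, neg_add, ← sub_eq_add_neg, benentiSum_sub_one h0 (by omega),
      ih (by omega) le_rfl]
    have hr : r - 1 = 0 ↔ r = 1 := by omega
    simp only [hr]
    split_ifs with hr1
    · rfl
    · rw [ih (by omega) (by omega)]

theorem benenti_eq_benentiSum {lam : Fin n → ℝ} (hinj : Function.Injective lam)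
    (h0 : ∀ j, lam j ≠ 0) (k : ℤ) {r : ℕ} (h1 : 1 ≤ r) (h2 : r ≤ n) :
    benenti n (fun a => viete a lam) k r = benentiSum lam k (r - 1) := by
  rw [benenti]
  split_ifs with hk
  · rw [Vpos_eq_benentiSum hinj h0 _ h1 h2, Int.toNat_of_nonneg hk]
  · rw [Vneg_eq_benentiSum hinj h0 _ h1 h2, Int.toNat_of_nonneg (by omega), neg_neg]

end BenentiSum

theorem gmat_eq_powerMatrix_mul {n : ℕ} {lam : Fin n → ℝ} (hinj : Function.Injective lam)
    (h0 : ∀ j, lam j ≠ 0) (m : ℤ) :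
    gmat n m lam =
      powerMatrix lam * diagonal (fun j => lam j ^ (-m) / Delta lam j) * (powerMatrix lam)ᵀ := by
  ext i k
  rw [gmat, of_apply, benenti_eq_benentiSum hinj h0 _ le_rfl i.pos, mul_apply]
  refine sum_congr rfl fun j _ => ?_
  have hexp : 2 * (n : ℤ) - m - ((i : ℕ) + 1) - ((k : ℕ) + 1) =
      ((n - 1 - (i : ℕ) : ℕ) : ℤ) + -m + ((n - 1 - (k : ℕ) : ℕ) : ℤ) := by
    have := i.isLt
    have := k.isLt
    omega
  simp only [Nat.sub_self, vieteOn_zero, one_mul, mul_diagonal, powerMatrix, of_apply,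
    transpose_apply, hexp, zpow_add₀ (h0 j), zpow_natCast]
  ring

theorem covariant_metric_in_viete_coordinates_general (n : ℕ) (m : ℤ)
    (lam : Fin n → ℝ) (hinj : Function.Injective lam) (h0 : ∀ j, lam j ≠ 0) :
    Jmat n lam * Gmat n m lam * (Jmat n lam).transpose * gmat n m lam = 1 ∧
    gmat n m lam * (Jmat n lam * Gmat n m lam * (Jmat n lam).transpose) = 1 := by
  have hdiag : Gmat n m lam * diagonal (Delta lam) *
      diagonal (fun j => lam j ^ (-m) / Delta lam j) = diagonal fun j => (Delta lam j)⁻¹ := by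
    rw [Gmat, diagonal_mul_diagonal, diagonal_mul_diagonal]
    refine congrArg diagonal (funext fun j => ?_)
    have := Delta_ne_zero hinj j
    have := zpow_ne_zero m (h0 j)
    rw [_root_.zpow_neg]
    field_simp
  have hinv : Jmat n lam * Gmat n m lam * (Jmat n lam).transpose * gmat n m lam = 1 := by
    rw [Jmat_eq_neg_reducedVieteMatrix, gmat_eq_powerMatrix_mul hinj h0]
    simp only [transpose_neg, Matrix.neg_mul, Matrix.mul_neg, neg_neg]
    set U := reducedVieteMatrix lam
    set S := powerMatrix lam
    set D := diagonal fun j => lam j ^ (-m) / Delta lam j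
    have hUS : Uᵀ * S = diagonal (Delta lam) := by
      simpa using congrArg transpose (powerMatrix_transpose_mul_reducedVieteMatrix lam)
    calc U * Gmat n m lam * Uᵀ * (S * D * Sᵀ)
        = U * (Gmat n m lam * (Uᵀ * S) * D) * Sᵀ := by
          simp only [Matrix.mul_assoc]
      _ = U * (diagonal (fun j => (Delta lam j)⁻¹) * Sᵀ) := by
          rw [hUS, hdiag, Matrix.mul_assoc]
      _ = 1 := reducedVieteMatrix_mul_inverse hinj
  exact ⟨hinv, mul_eq_one_comm.mp hinv⟩

theorem covariant_metric_in_viete_coordinates (n : ℕ) (hn : 1 ≤ n) (m : ℤ)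
    (lam : Fin n → ℝ) (hinj : Function.Injective lam) (h0 : ∀ j, lam j ≠ 0) :
    Jmat n lam * Gmat n m lam * (Jmat n lam).transpose * gmat n m lam = 1 ∧
    gmat n m lam * (Jmat n lam * Gmat n m lam * (Jmat n lam).transpose) = 1 :=
  covariant_metric_in_viete_coordinates_general n m lam hinj h0
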